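/- For the globular coalgebra structure maps on the chains of a globular set, in the case 0 < k < n−1: ∂(Δ_k x) − (−1)^k Δ_k(∂x) = (1 + (−1)^k T) Δ_{k−1}(x), where x has degree n. -/

import Mathlib

open TensorProduct

/-- The canonical `Zero` instance on tensor products (stated explicitly to help
instance synthesis for tensor squares of `Finsupp` modules). -/
noncomputable instance tensorZero {R M N : Type} [CommRing R] [AddCommGroup M]
    [AddCommGroup N] [Module R M] [Module R N] : Zero (TensorProduct R M N) :=
  (inferInstance : AddCommMonoid (TensorProduct R M N)).toZero

/-- A globular set: sets `X n` with source, target and identity (reflexivity) maps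
satisfying the globular relations. -/
structure GlobularSet where
  X : ℕ → Type
  s : ∀ n, X (n+1) → X n
  t : ∀ n, X (n+1) → X n
  i : ∀ n, X n → X (n+1)
  glob_tt : ∀ n (x : X (n+2)), t n (t (n+1) x) = t n (s (n+1) x)
  glob_ss : ∀ n (x : X (n+2)), s n (s (n+1) x) = s n (t (n+1) x)
  t_i : ∀ n (x : X n), t n (i n x) = x
  s_i : ∀ n (x : X n), s n (i n x) = x

namespace GlobularSet

variable (G : GlobularSet)

/-- Iterated target map `X (n + j) → X n`. -/
def tdown : ∀ (j : ℕ) {n : ℕ}, G.X (n + j) → G.X n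
  | 0, _, x => x
  | j+1, n, x => tdown j (G.t (n + j) x)

/-- Iterated source map `X (n + j) → X n`. -/
def sdown : ∀ (j : ℕ) {n : ℕ}, G.X (n + j) → G.X n
  | 0, _, x => x
  | j+1, n, x => sdown j (G.s (n + j) x)

/-- The target map `t_k : X n → X k` for `k ≤ n`. -/
def tgt (k : ℕ) {n : ℕ} (h : k ≤ n) (x : G.X n) : G.X k :=
  G.tdown (n - k) (cast (congrArg G.X (Nat.add_sub_cancel' h).symm) x)

/-- The source map `s_k : X n → X k` for `k ≤ n`. -/
def src (k : ℕ) {n : ℕ} (h : k ≤ n) (x : G.X n) : G.X k :=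
  G.sdown (n - k) (cast (congrArg G.X (Nat.add_sub_cancel' h).symm) x)

variable (R : Type) [CommRing R]

/-- The total module of `R`-chains of a globular set (free on all cells; the
degenerate cells span the subspace one quotients by). -/
abbrev Chains := (Σ n, G.X n) →₀ R

/-- The basis element of the chains corresponding to a cell. -/
noncomputable def el {n : ℕ} (x : G.X n) : Chains G R := Finsupp.single ⟨n, x⟩ 1

/-- The boundary `∂ x = t x - s x` (zero in degree `0`). -/
noncomputable def bdry : Chains G R →ₗ[R] Chains G R :=
  Finsupp.lift _ R _ (fun p =>
    match p with
    | ⟨0, _⟩ => 0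
    | ⟨n+1, x⟩ => G.el R (G.t n x) - G.el R (G.s n x))

/-- The Koszul sign operator, multiplying a degree-`n` cell by `(-1)^n`. -/
noncomputable def koszul : Chains G R →ₗ[R] Chains G R :=
  Finsupp.lift _ R _ (fun p => ((-1 : R)^p.1) • (Finsupp.single p 1 : Chains G R))

/-- The boundary of the tensor square: `∂(a ⊗ b) = ∂a ⊗ b + (-1)^{|a|} a ⊗ ∂b`. -/
noncomputable def bdryTensor :
    Chains G R ⊗[R] Chains G R →ₗ[R] Chains G R ⊗[R] Chains G R :=
  TensorProduct.map (G.bdry R) LinearMap.id + TensorProduct.map (G.koszul R) (G.bdry R)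

/-- The signed transposition `T (a ⊗ b) = (-1)^{|a||b|} b ⊗ a`. -/
noncomputable def swapT :
    Chains G R ⊗[R] Chains G R →ₗ[R] Chains G R ⊗[R] Chains G R :=
  TensorProduct.lift (Finsupp.lift _ R _ (fun p => Finsupp.lift _ R _ (fun q =>
    ((-1 : R)^(p.1 * q.1)) •
      ((Finsupp.single q 1 : Chains G R) ⊗ₜ[R] (Finsupp.single p 1 : Chains G R)))))

/-- The globular coproducts `Δ_k`:  `Δ_k x = 0` if `|x| < k`, `x ⊗ x` if `|x| = k`, and
`t_k x ⊗ x + (-1)^{(|x|+1)k} x ⊗ s_k x` if `k < |x|`. -/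
noncomputable def Δ (k : ℕ) : Chains G R →ₗ[R] Chains G R ⊗[R] Chains G R :=
  Finsupp.lift (Chains G R ⊗[R] Chains G R) R (Σ n, G.X n) (fun p =>
    if h : p.1 < k then (0 : Chains G R ⊗[R] Chains G R)
    else if p.1 = k then (Finsupp.single p 1 : Chains G R) ⊗ₜ[R] (Finsupp.single p 1)
    else
      (G.el R (G.tgt k (Nat.le_of_not_lt h) p.2)) ⊗ₜ[R] (Finsupp.single p 1 : Chains G R)
      + ((-1 : R)^((p.1 + 1) * k)) •
        ((Finsupp.single p 1 : Chains G R) ⊗ₜ[R] (G.el R (G.src k (Nat.le_of_not_lt h) p.2))))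

/-- The augmentation `ε`. -/
noncomputable def aug : Chains G R →ₗ[R] R :=
  Finsupp.lift _ R _ (fun p => if p.1 = 0 then (1 : R) else 0)

end GlobularSet


/-! Write `a = t_k x` and `b = s_k x`. Globularity gives `∂a = ∂b = t_{k-1}x - s_{k-1}x`, and,
since `k < n - 1`, the maps `t_k`, `s_k` agree on `t_{n-1}x` and `s_{n-1}x`, so
`Δ_k ∂x = a ⊗ ∂x ± ∂x ⊗ b`. Expanding `∂(a ⊗ x ± x ⊗ b)` by the Leibniz rule, the terms
containing `∂x` cancel against `(-1)^k Δ_k ∂x`, and what remains,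
`(t_{k-1}x - s_{k-1}x) ⊗ x ± x ⊗ (t_{k-1}x - s_{k-1}x)`, is `(1 + (-1)^k T) Δ_{k-1} x`; the signs
only depend on the parities of `k` and `n`. -/

namespace GlobularSet

variable (G : GlobularSet)

section Faces

theorem tgt_eq_tdown (k c : ℕ) (h : k ≤ k + c) (x : G.X (k + c)) :
    G.tgt k h x = G.tdown c x := by
  have key : ∀ d (e : k + c = k + d), d = c →
      G.tdown d (cast (congrArg G.X e) x) = G.tdown c x := by
    rintro d e rfl; rfl
  exact key _ (Nat.add_sub_cancel' h).symm (Nat.add_sub_cancel_left k c)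

theorem src_eq_sdown (k c : ℕ) (h : k ≤ k + c) (x : G.X (k + c)) :
    G.src k h x = G.sdown c x := by
  have key : ∀ d (e : k + c = k + d), d = c →
      G.sdown d (cast (congrArg G.X e) x) = G.sdown c x := by
    rintro d e rfl; rfl
  exact key _ (Nat.add_sub_cancel' h).symm (Nat.add_sub_cancel_left k c)

variable {k p : ℕ}

@[simp]
theorem tgt_self (x : G.X p) : G.tgt p le_rfl x = x :=
  G.tgt_eq_tdown p 0 le_rfl x

@[simp]
theorem src_self (x : G.X p) : G.src p le_rfl x = x :=
  G.src_eq_sdown p 0 le_rfl x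

theorem tgt_t (h : k ≤ p) (x : G.X (p + 1)) :
    G.tgt k h (G.t p x) = G.tgt k (h.trans p.le_succ) x := by
  obtain ⟨c, rfl⟩ := Nat.exists_eq_add_of_le h
  rw [G.tgt_eq_tdown k c, G.tgt_eq_tdown k (c + 1)]
  rfl

theorem src_s (h : k ≤ p) (x : G.X (p + 1)) :
    G.src k h (G.s p x) = G.src k (h.trans p.le_succ) x := by
  obtain ⟨c, rfl⟩ := Nat.exists_eq_add_of_le h
  rw [G.src_eq_sdown k c, G.src_eq_sdown k (c + 1)]
  rfl

theorem tgt_s (h : k < p) (x : G.X (p + 1)) :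
    G.tgt k h.le (G.s p x) = G.tgt k (h.le.trans p.le_succ) x := by
  obtain ⟨q, rfl⟩ := Nat.exists_eq_add_of_lt h
  rw [← G.tgt_t (by omega), ← G.glob_tt, G.tgt_t (by omega), G.tgt_t]

theorem src_t (h : k < p) (x : G.X (p + 1)) :
    G.src k h.le (G.t p x) = G.src k (h.le.trans p.le_succ) x := by
  obtain ⟨q, rfl⟩ := Nat.exists_eq_add_of_lt h
  rw [← G.src_s (by omega), ← G.glob_ss, G.src_s (by omega), G.src_s]

theorem t_tgt_succ : ∀ {n : ℕ} (h : k + 1 ≤ n) (x : G.X n),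
    G.t k (G.tgt (k + 1) h x) = G.tgt k (by omega) x
  | p + 1, h, x => by
    rcases Nat.eq_or_lt_of_le h with hp | hp
    · obtain rfl : k = p := by omega
      rw [tgt_self, ← G.tgt_t le_rfl, tgt_self]
    · rw [← G.tgt_t (by omega), ← G.tgt_t (by omega), t_tgt_succ]

theorem s_tgt_succ : ∀ {n : ℕ} (h : k + 1 ≤ n) (x : G.X n),
    G.s k (G.tgt (k + 1) h x) = G.src k (by omega) x
  | p + 1, h, x => by
    rcases Nat.eq_or_lt_of_le h with hp | hp
    · obtain rfl : k = p := by omega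
      rw [tgt_self, ← G.src_s le_rfl, src_self]
    · rw [← G.tgt_t (by omega), ← G.src_t (by omega), s_tgt_succ]

theorem t_src_succ : ∀ {n : ℕ} (h : k + 1 ≤ n) (x : G.X n),
    G.t k (G.src (k + 1) h x) = G.tgt k (by omega) x
  | p + 1, h, x => by
    rcases Nat.eq_or_lt_of_le h with hp | hp
    · obtain rfl : k = p := by omega
      rw [src_self, ← G.tgt_t le_rfl, tgt_self]
    · rw [← G.src_s (by omega), ← G.tgt_s (by omega), t_src_succ]

theorem s_src_succ : ∀ {n : ℕ} (h : k + 1 ≤ n) (x : G.X n),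
    G.s k (G.src (k + 1) h x) = G.src k (by omega) x
  | p + 1, h, x => by
    rcases Nat.eq_or_lt_of_le h with hp | hp
    · obtain rfl : k = p := by omega
      rw [src_self, ← G.src_s le_rfl, src_self]
    · rw [← G.src_s (by omega), ← G.src_s (by omega), s_src_succ]

end Faces

section ChainMaps

variable (R : Type) [CommRing R]

theorem lift_el {M : Type} [AddCommMonoid M] [Module R M] (f : (Σ n, G.X n) → M)
    {n : ℕ} (x : G.X n) :
    Finsupp.lift M R (Σ n, G.X n) f (G.el R x) = f ⟨n, x⟩ := by
  simp [el]

theorem bdry_el {n : ℕ} (x : G.X (n + 1)) :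
    G.bdry R (G.el R x) = G.el R (G.t n x) - G.el R (G.s n x) :=
  G.lift_el R _ x

theorem koszul_el {n : ℕ} (x : G.X n) :
    G.koszul R (G.el R x) = (-1 : R) ^ n • G.el R x :=
  G.lift_el R _ x

theorem swapT_el_tmul_el {n m : ℕ} (x : G.X n) (y : G.X m) :
    G.swapT R (G.el R x ⊗ₜ[R] G.el R y) = (-1 : R) ^ (n * m) • (G.el R y ⊗ₜ[R] G.el R x) := by
  rw [swapT, TensorProduct.lift.tmul, G.lift_el R, G.lift_el R]
  rfl

theorem bdryTensor_tmul (a b : Chains G R) :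
    G.bdryTensor R (a ⊗ₜ[R] b) = G.bdry R a ⊗ₜ[R] b + G.koszul R a ⊗ₜ[R] G.bdry R b := by
  simp [bdryTensor]

theorem Δ_el_of_lt {k n : ℕ} (h : k < n) (x : G.X n) :
    G.Δ R k (G.el R x) = G.el R (G.tgt k h.le x) ⊗ₜ[R] G.el R x
      + (-1 : R) ^ ((n + 1) * k) • (G.el R x ⊗ₜ[R] G.el R (G.src k h.le x)) := by
  rw [Δ, G.lift_el R, dif_neg h.not_gt, if_neg h.ne']
  rfl

theorem bdry_el_tgt_succ {k n : ℕ} (h : k + 1 ≤ n) (x : G.X n) :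
    G.bdry R (G.el R (G.tgt (k + 1) h x))
      = G.el R (G.tgt k (by omega) x) - G.el R (G.src k (by omega) x) := by
  rw [bdry_el, t_tgt_succ, s_tgt_succ]

theorem bdry_el_src_succ {k n : ℕ} (h : k + 1 ≤ n) (x : G.X n) :
    G.bdry R (G.el R (G.src (k + 1) h x))
      = G.el R (G.tgt k (by omega) x) - G.el R (G.src k (by omega) x) := by
  rw [bdry_el, t_src_succ, s_src_succ]

theorem Δ_bdry_el {k p : ℕ} (h : k < p) (x : G.X (p + 1)) :
    G.Δ R k (G.bdry R (G.el R x))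
      = G.el R (G.tgt k (by omega) x) ⊗ₜ[R] G.bdry R (G.el R x)
        + (-1 : R) ^ ((p + 1) * k) •
          (G.bdry R (G.el R x) ⊗ₜ[R] G.el R (G.src k (by omega) x)) := by
  rw [bdry_el, map_sub, G.Δ_el_of_lt R h, G.Δ_el_of_lt R h, G.tgt_t h.le, G.src_t h,
    G.tgt_s h, G.src_s h.le, TensorProduct.tmul_sub, TensorProduct.sub_tmul, smul_sub]
  abel

end ChainMaps

end GlobularSet

open GlobularSet in
/-- the coherence `∂ Δ_k - (-1)^k Δ_k ∂ = (1 + (-1)^k T) Δ_{k-1}` for the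
globular coalgebra in the case `0 < k < n - 1`, for `x` of degree `n`. -/
theorem globular_coalgebra_case_k_lt_n_sub_one
    (G : GlobularSet) (R : Type) [CommRing R] (k n : ℕ) (hk : 0 < k) (hkn : k + 1 < n)
    (x : G.X n) :
    G.bdryTensor R (G.Δ R k (G.el R x))
      - ((-1 : R)^k) • G.Δ R k (G.bdry R (G.el R x))
    = G.Δ R (k - 1) (G.el R x) + ((-1 : R)^k) • G.swapT R (G.Δ R (k - 1) (G.el R x)) := by
  obtain ⟨m, rfl⟩ : ∃ m, k = m + 1 := ⟨k - 1, by omega⟩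
  obtain ⟨p, rfl⟩ : ∃ p, n = p + 1 := ⟨n - 1, by omega⟩
  rw [Nat.add_sub_cancel, G.Δ_el_of_lt R (by omega : m + 1 < p + 1),
    G.Δ_el_of_lt R (by omega : m < p + 1), G.Δ_bdry_el R (by omega)]
  simp only [map_add, map_smul, G.bdryTensor_tmul R, G.bdry_el_tgt_succ R, G.bdry_el_src_succ R,
    G.koszul_el R, G.swapT_el_tmul_el R, TensorProduct.tmul_sub, TensorProduct.sub_tmul,
    ← TensorProduct.smul_tmul']
  rcases Nat.even_or_odd m with hm | hm <;> rcases Nat.even_or_odd p with hp | hp <;>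
    simp only [pow_add, pow_mul, hm.neg_one_pow, hp.neg_one_pow, pow_one, mul_neg, neg_neg,
      mul_one, one_pow] <;>
    module
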